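/- The theory T is rigid if and only if the monoid presentation ⟨G | u_i = v_i (i < m)⟩ does not prove u = v. -/

import Mathlib

/-- Terms of the theory `T`: unary symbols `g x` for each letter `x` of the alphabet `Fin N`,
an extra unary symbol `al` (written α), and a binary symbol `m`, in context `x_1, ..., x_n`. -/
inductive TmT (N : ℕ) : ℕ → Type
  | var {n} : Fin n → TmT N n
  | g {n} : Fin N → TmT N n → TmT N n
  | al {n} : TmT N n → TmT N n
  | m {n} : TmT N n → TmT N n → TmT N n

/-- A word `w` over the alphabet applied to a term as a composite of unary symbols. -/
def wApp {N n : ℕ} (w : List (Fin N)) (t : TmT N n) : TmT N n :=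
  w.foldr (fun x s => TmT.g x s) t

/-- Equational provability in the theory `T` with axioms `u_i(x1) = v_i(x1)` (for `i : Fin M`,
where `u_i = ur i`, `v_i = vr i`) and `m(uα(x1), x2) = m(vα(x2), x1)`, closed under
all substitution instances and congruence. -/
inductive ProvT {N : ℕ} (M : ℕ) (ur vr : Fin M → List (Fin N)) (u v : List (Fin N)) :
    {n : ℕ} → TmT N n → TmT N n → Prop
  | refl {n} (t : TmT N n) : ProvT M ur vr u v t t
  | symm {n} {s t : TmT N n} : ProvT M ur vr u v s t → ProvT M ur vr u v t s
  | trans {n} {s t w : TmT N n} :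
      ProvT M ur vr u v s t → ProvT M ur vr u v t w → ProvT M ur vr u v s w
  | congg {n} (x : Fin N) {s t : TmT N n} :
      ProvT M ur vr u v s t → ProvT M ur vr u v (.g x s) (.g x t)
  | congal {n} {s t : TmT N n} : ProvT M ur vr u v s t → ProvT M ur vr u v (.al s) (.al t)
  | congm {n} {a a' b b' : TmT N n} : ProvT M ur vr u v a a' → ProvT M ur vr u v b b' →
      ProvT M ur vr u v (.m a b) (.m a' b')
  | axu {n} (i : Fin M) (t : TmT N n) : ProvT M ur vr u v (wApp (ur i) t) (wApp (vr i) t)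
  | axm {n} (t₁ t₂ : TmT N n) :
      ProvT M ur vr u v (.m (wApp u (.al t₁)) t₂) (.m (wApp v (.al t₂)) t₁)

/-- Provability of word equations from the monoid presentation
`⟨ Fin N | ur i = vr i (i : Fin M) ⟩`: the congruence on the free monoid of words
over `Fin N` generated by the relations. -/
inductive MonProv {N M : ℕ} (ur vr : Fin M → List (Fin N)) :
    List (Fin N) → List (Fin N) → Prop
  | of (i : Fin M) : MonProv ur vr (ur i) (vr i)
  | refl (w : List (Fin N)) : MonProv ur vr w w
  | symm {a b} : MonProv ur vr a b → MonProv ur vr b a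
  | trans {a b c} : MonProv ur vr a b → MonProv ur vr b c → MonProv ur vr a c
  | mul {a b c d} : MonProv ur vr a b → MonProv ur vr c d → MonProv ur vr (a ++ c) (b ++ d)

/-- The left-to-right list of variable occurrences of a term of `T`. -/
def varListT {N n : ℕ} : TmT N n → List (Fin n)
  | .var i => [i]
  | .g _ t => varListT t
  | .al t => varListT t
  | .m a b => varListT a ++ varListT b

/-- A term of `T` in context `x_1, ..., x_n` is linear-regular if every variable
occurs exactly once. -/
def LinRegT {N n : ℕ} (t : TmT N n) : Prop := ∀ i : Fin n, (varListT t).count i = 1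

/-- Substitution of variables along a map of variables (`t(x_{σ(1)},...,x_{σ(n)})`). -/
def renameT {N n : ℕ} (σ : Fin n → Fin n) : TmT N n → TmT N n
  | .var i => .var (σ i)
  | .g x t => .g x (renameT σ t)
  | .al t => .al (renameT σ t)
  | .m a b => .m (renameT σ a) (renameT σ b)

/-- The theory `T` is rigid: no linear-regular term is provably equal to a nontrivial
permutation of its variables. -/
def RigidT {N : ℕ} (M : ℕ) (ur vr : Fin M → List (Fin N)) (u v : List (Fin N)) : Prop :=
  ∀ (n : ℕ) (t : TmT N n), LinRegT t → ∀ σ : Equiv.Perm (Fin n),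
    ProvT M ur vr u v t (renameT σ t) → σ = 1

/-!
If `u = v` fails in the presented monoid, the term model of `T` maps to an algebra of
normal forms: trees whose nodes carry an element of the presented monoid (the word of unary
symbols in front of them) and in which a node `m(uα x, y)` and the node `m(vα y, x)` are both
represented by one `twist` node. Being a tree, a normal form remembers where each variable
sits, so renaming the variables of a term by `σ` without changing its normal form forces `σ`
to fix every variable that occurs. Conversely, if `u = v` in the monoid then
`m(uα x₁, x₂) = m(vα x₂, x₁) = m(uα x₂, x₁)` is a nontrivial symmetry.
-/

section Terms

variable {N M : ℕ} {ur vr : Fin M → List (Fin N)} {u v : List (Fin N)}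

theorem wApp_append {n : ℕ} (w w' : List (Fin N)) (t : TmT N n) :
    wApp (w ++ w') t = wApp w (wApp w' t) :=
  List.foldr_append ..

theorem varListT_wApp {n : ℕ} (w : List (Fin N)) (t : TmT N n) :
    varListT (wApp w t) = varListT t := by
  induction w with
  | nil => rfl
  | cons x w ih => exact ih

theorem renameT_wApp {n : ℕ} (σ : Fin n → Fin n) (w : List (Fin N)) (t : TmT N n) :
    renameT σ (wApp w t) = wApp w (renameT σ t) := by
  induction w with
  | nil => rfl
  | cons x w ih => exact congrArg (TmT.g x) ih

theorem ProvT.wApp_congr {n : ℕ} {s t : TmT N n} (h : ProvT M ur vr u v s t)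
    (w : List (Fin N)) : ProvT M ur vr u v (wApp w s) (wApp w t) := by
  induction w with
  | nil => exact h
  | cons x w ih => exact .congg x ih

theorem ProvT.wApp_of_monProv {a b : List (Fin N)} (h : MonProv ur vr a b) {n : ℕ}
    (t : TmT N n) : ProvT M ur vr u v (wApp a t) (wApp b t) := by
  induction h generalizing t with
  | of i => exact .axu i t
  | refl w => exact .refl _
  | symm _ ih => exact (ih t).symm
  | trans _ _ ih₁ ih₂ => exact (ih₁ t).trans (ih₂ t)
  | @mul a b c d _ _ ih₁ ih₂ =>
    rw [wApp_append, wApp_append]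
    exact (ProvT.wApp_congr (ih₂ t) a).trans (ih₁ _)

theorem provT_swap_of_monProv (h : MonProv ur vr u v) :
    ProvT M ur vr u v (.m (wApp u (.al (.var 0))) (.var 1) : TmT N 2)
      (.m (wApp u (.al (.var 1))) (.var 0)) :=
  (ProvT.axm _ _).trans (.congm (.wApp_of_monProv h.symm _) (.refl _))

end Terms

/-- `twist p x y` stands for `p m(uα x, y)`. -/
inductive NF (P V : Type*)
  | var : P → V → NF P V
  | al : P → NF P V → NF P V
  | plain : P → NF P V → NF P V → NF P V
  | twist : P → NF P V → NF P V → NF P V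

namespace NF

variable {P V W : Type*}

def mapWord (f : P → P) : NF P V → NF P V
  | var p i => var (f p) i
  | al p x => al (f p) x
  | plain p x y => plain (f p) x y
  | twist p x y => twist (f p) x y

def rename (σ : V → W) : NF P V → NF P W
  | var p i => var p (σ i)
  | al p x => al p (x.rename σ)
  | plain p x y => plain p (x.rename σ) (y.rename σ)
  | twist p x y => twist p (x.rename σ) (y.rename σ)

def vars : NF P V → List V
  | var _ i => [i]
  | al _ x => x.vars
  | plain _ x y => x.vars ++ y.vars
  | twist _ x y => x.vars ++ y.vars

section Node

variable [DecidableEq P] (one pu pv : P)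

/-- The interpretation of the binary symbol `m`; `one`, `pu`, `pv` are the classes of the
empty word, of `u` and of `v`. -/
def node : NF P V → NF P V → NF P V
  | al p x, y => if p = pu then twist one x y else if p = pv then twist one y x
      else plain one (al p x) y
  | x, y => plain one x y

theorem node_al_comm (huv : pu ≠ pv) (x y : NF P V) :
    node one pu pv (al pv y) x = node one pu pv (al pu x) y := by
  simp [node, huv.symm]

theorem rename_node (σ : V → W) (x y : NF P V) :
    (node one pu pv x y).rename σ = node one pu pv (x.rename σ) (y.rename σ) := by
  cases x with
  | al p x => simp only [node, rename]; split_ifs <;> rfl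
  | _ => rfl

theorem mem_vars_node {i : V} {x y : NF P V} :
    i ∈ (node one pu pv x y).vars ↔ i ∈ x.vars ∨ i ∈ y.vars := by
  cases x with
  | al p x => simp only [node]; split_ifs <;> simp only [vars, List.mem_append, or_comm]
  | _ => exact List.mem_append

end Node

theorem rename_mapWord (σ : V → W) (f : P → P) (x : NF P V) :
    (x.mapWord f).rename σ = (x.rename σ).mapWord f := by
  cases x <;> rfl

theorem mapWord_id (x : NF P V) : x.mapWord id = x := by
  cases x <;> rfl

theorem mapWord_mapWord (f g : P → P) (x : NF P V) :
    (x.mapWord f).mapWord g = x.mapWord (g ∘ f) := by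
  cases x <;> rfl

theorem vars_mapWord (f : P → P) (x : NF P V) : (x.mapWord f).vars = x.vars := by
  cases x <;> rfl

theorem apply_eq_of_rename_eq_self {σ : V → V} {x : NF P V} (h : x.rename σ = x) :
    ∀ i ∈ x.vars, σ i = i := by
  induction x with
  | var p j =>
    simp only [rename, var.injEq, true_and] at h
    simpa [vars] using h
  | al p x ih =>
    simp only [rename, al.injEq, true_and] at h
    exact ih h
  | plain p x y ihx ihy | twist p x y ihx ihy =>
    simp only [rename, plain.injEq, twist.injEq, true_and] at h
    simpa [vars, or_imp, forall_and] using And.intro (ihx h.1) (ihy h.2)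

end NF

section Monoid

variable {N M : ℕ} (ur vr : Fin M → List (Fin N))

def MonProv.setoid : Setoid (List (Fin N)) where
  r := MonProv ur vr
  iseqv := ⟨.refl, .symm, .trans⟩

/-- The presented monoid `⟨Fin N | ur i = vr i⟩`, as a set of word classes. -/
abbrev WordClass := Quotient (MonProv.setoid ur vr)

noncomputable instance : DecidableEq (WordClass ur vr) := Classical.decEq _

variable {ur vr}

def WordClass.prepend (w : List (Fin N)) : WordClass ur vr → WordClass ur vr :=
  Quotient.map (w ++ ·) fun _ _ h => (MonProv.refl w).mul h

theorem WordClass.prepend_nil : prepend (ur := ur) (vr := vr) [] = id :=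
  funext fun c => Quotient.inductionOn c fun _ => rfl

theorem WordClass.prepend_comp_prepend (x : Fin N) (w : List (Fin N)) :
    prepend (ur := ur) (vr := vr) [x] ∘ prepend w = prepend (x :: w) :=
  funext fun c => Quotient.inductionOn c fun _ => rfl

theorem WordClass.prepend_nil_class (w : List (Fin N)) :
    prepend w (⟦[]⟧ : WordClass ur vr) = ⟦w⟧ :=
  congrArg _ (List.append_nil w)

theorem WordClass.prepend_congr {w w' : List (Fin N)} (h : MonProv ur vr w w') :
    prepend (ur := ur) (vr := vr) w = prepend w' :=
  funext fun c => Quotient.inductionOn c fun _ => Quotient.sound (h.mul (.refl _))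

end Monoid

section Eval

variable {N M : ℕ} (ur vr : Fin M → List (Fin N)) (u v : List (Fin N))

noncomputable def evalNF {n : ℕ} : TmT N n → NF (WordClass ur vr) (Fin n)
  | .var i => .var ⟦[]⟧ i
  | .g x t => (evalNF t).mapWord (WordClass.prepend [x])
  | .al t => .al ⟦[]⟧ (evalNF t)
  | .m a b => NF.node ⟦[]⟧ ⟦u⟧ ⟦v⟧ (evalNF a) (evalNF b)

variable {ur vr u v}

theorem evalNF_wApp {n : ℕ} (w : List (Fin N)) (t : TmT N n) :
    evalNF ur vr u v (wApp w t) = (evalNF ur vr u v t).mapWord (WordClass.prepend w) := by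
  induction w with
  | nil => rw [WordClass.prepend_nil, NF.mapWord_id]; rfl
  | cons x w ih =>
    change (evalNF ur vr u v (wApp w t)).mapWord _ = _
    rw [ih, NF.mapWord_mapWord, WordClass.prepend_comp_prepend]

theorem evalNF_renameT {n : ℕ} (σ : Fin n → Fin n) (t : TmT N n) :
    evalNF ur vr u v (renameT σ t) = (evalNF ur vr u v t).rename σ := by
  induction t with
  | var i => rfl
  | g x t ih => simp only [renameT, evalNF, ih, NF.rename_mapWord]
  | al t ih => simp only [renameT, evalNF, ih, NF.rename]
  | m a b iha ihb => simp only [renameT, evalNF, iha, ihb, NF.rename_node]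

theorem mem_vars_evalNF {n : ℕ} {i : Fin n} {t : TmT N n} (hi : i ∈ varListT t) :
    i ∈ (evalNF ur vr u v t).vars := by
  induction t with
  | var j => simpa [varListT, evalNF, NF.vars] using hi
  | g x t ih => simpa only [evalNF, NF.vars_mapWord] using ih hi
  | al t ih => exact ih hi
  | m a b iha ihb =>
    simp only [varListT, List.mem_append] at hi
    exact (NF.mem_vars_node _ _ _).mpr (hi.imp iha ihb)

theorem evalNF_eq_of_provT (huv : ¬ MonProv ur vr u v) {n : ℕ} {s t : TmT N n}
    (h : ProvT M ur vr u v s t) : evalNF ur vr u v s = evalNF ur vr u v t := by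
  induction h with
  | refl t => rfl
  | symm _ ih => exact ih.symm
  | trans _ _ ih₁ ih₂ => exact ih₁.trans ih₂
  | congg x _ ih => simp only [evalNF, ih]
  | congal _ ih => simp only [evalNF, ih]
  | congm _ _ iha ihb => simp only [evalNF, iha, ihb]
  | axu i t => rw [evalNF_wApp, evalNF_wApp, WordClass.prepend_congr (.of i)]
  | axm t₁ t₂ =>
    have hne : (⟦u⟧ : WordClass ur vr) ≠ ⟦v⟧ := fun h => huv (Quotient.exact h)
    simp only [evalNF, evalNF_wApp, NF.mapWord, WordClass.prepend_nil_class]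
    exact (NF.node_al_comm _ _ _ hne _ _).symm

end Eval

/-- The theory `T` is rigid if and only if the monoid presentation
`⟨G | ur i = vr i (i : Fin M)⟩` does not prove `u = v`. -/
theorem rigid_iff_not_word_problem {N M : ℕ} (ur vr : Fin M → List (Fin N))
    (u v : List (Fin N)) :
    RigidT M ur vr u v ↔ ¬ MonProv ur vr u v := by
  constructor
  · intro hrigid huv
    let t : TmT N 2 := .m (wApp u (.al (.var 0))) (.var 1)
    have hlin : LinRegT t := by
      intro i
      fin_cases i <;> simp [t, varListT, varListT_wApp]
    have hswap : ProvT M ur vr u v t (renameT (Equiv.swap 0 1) t) := by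
      simpa [t, renameT, renameT_wApp] using provT_swap_of_monProv huv
    exact absurd (congrArg (· 0) (hrigid 2 t hlin _ hswap)) (by decide)
  · intro huv n t hlin σ hprov
    have hfix : (evalNF ur vr u v t).rename σ = evalNF ur vr u v t := by
      rw [← evalNF_renameT, evalNF_eq_of_provT huv hprov]
    ext i
    have hi : i ∈ varListT t := List.count_pos_iff.mp (by rw [hlin i]; exact Nat.one_pos)
    exact congrArg Fin.val (NF.apply_eq_of_rename_eq_self hfix i (mem_vars_evalNF hi))
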